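/- Fix a positive integer k. The generating function of compositions with no part divisible by k satisfies (1 - x - x^2 - ... - x^k) · C(x) = 1 - x^k as formal power series, where C(x) = 1 + Σ_{n≥1} c_{\bar A}(n) x^n and A = {jk : j ≥ 1}. -/

import Mathlib

/-!
Splitting off the first part `i ∈ A` of a composition gives `C = 1 + P C` with
`P = ∑_{i ∈ A, i > 0} X^i`, that is `(1 - P) C = 1`. When `A` is the set of non-multiples of `k`,
the coefficients of `P` satisfy `p n = p (n - k)` for `n ≥ k`, so `(1 - X^k) P = X + ⋯ + X^(k-1)`;
multiplying `(1 - P) C = 1` by `1 - X^k` gives the identity.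
-/

noncomputable def compCount (A : Set ℕ) (n : ℕ) : ℕ :=
  Nat.card {l : List ℕ // l.sum = n ∧ ∀ x ∈ l, 0 < x ∧ x ∈ A}

open Finset PowerSeries

abbrev CompositionsIn (A : Set ℕ) (n : ℕ) : Type :=
  {l : List ℕ // l.sum = n ∧ ∀ x ∈ l, 0 < x ∧ x ∈ A}

instance (A : Set ℕ) (n : ℕ) : Finite (CompositionsIn A n) :=
  Finite.of_injective (fun l => (⟨l.1, fun hi => (l.2.2 _ hi).1, l.2.1⟩ : Composition n))
    fun _ _ h => Subtype.ext (congrArg Composition.blocks h)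

theorem compCount_zero (A : Set ℕ) : compCount A 0 = 1 := by
  refine Nat.card_eq_one_iff_exists.mpr ⟨⟨[], rfl, by simp⟩, ?_⟩
  rintro ⟨_ | ⟨a, t⟩, hsum, hparts⟩
  · rfl
  · have := (hparts a (by simp)).1
    simp at hsum
    omega

open scoped Classical in
theorem compCount_eq_sum_antidiagonal (A : Set ℕ) {n : ℕ} (hn : 0 < n) :
    compCount A n = ∑ p ∈ antidiagonal n with 0 < p.1 ∧ p.1 ∈ A, compCount A p.2 := by
  set F := {p ∈ antidiagonal n | 0 < p.1 ∧ p.1 ∈ A}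
  have mem_F {p : ℕ × ℕ} : p ∈ F ↔ p.1 + p.2 = n ∧ 0 < p.1 ∧ p.1 ∈ A := by
    rw [mem_filter, HasAntidiagonal.mem_antidiagonal]
  let cons (x : Σ p : F, CompositionsIn A p.1.2) : CompositionsIn A n :=
    ⟨x.1.1.1 :: x.2.1, by simp [x.2.2.1, (mem_F.1 x.1.2).1],
      by simpa [(mem_F.1 x.1.2).2] using x.2.2.2⟩
  have hcons : Function.Bijective cons := by
    refine ⟨?_, ?_⟩
    · rintro ⟨⟨⟨i, j⟩, hp⟩, l⟩ ⟨⟨⟨i', j'⟩, hq⟩, m⟩ h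
      obtain ⟨rfl, hlm⟩ := List.cons_eq_cons.mp (congrArg Subtype.val h)
      obtain rfl : j = j' := l.2.1.symm.trans ((congrArg List.sum hlm).trans m.2.1)
      obtain rfl : l = m := Subtype.ext hlm
      rfl
    · rintro ⟨_ | ⟨a, t⟩, hsum, hparts⟩
      · simp at hsum
        omega
      · obtain ⟨ha, hA⟩ := hparts a (by simp)
        exact ⟨⟨⟨(a, t.sum), mem_F.2 ⟨by simpa using hsum, ha, hA⟩⟩,
          ⟨t, rfl, fun x hx => hparts x (by simp [hx])⟩⟩, rfl⟩
  rw [compCount, ← Nat.card_congr (Equiv.ofBijective cons hcons), Nat.card_sigma,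
    ← sum_coe_sort F]
  rfl

section Series

variable (R : Type*) [Ring R]

noncomputable def partsSeries (A : Set ℕ) : R⟦X⟧ :=
  mk ({i | 0 < i ∧ i ∈ A}.indicator 1)

noncomputable def compSeries (A : Set ℕ) : R⟦X⟧ :=
  mk fun n => (compCount A n : R)

theorem one_sub_partsSeries_mul_compSeries (A : Set ℕ) :
    (1 - partsSeries R A) * compSeries R A = 1 := by
  classical
  ext n
  rw [sub_mul, one_mul, map_sub, coeff_mul, coeff_one]
  rcases Nat.eq_zero_or_pos n with rfl | hn
  · simp [partsSeries, compSeries, compCount_zero]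
  · simp only [partsSeries, compSeries, coeff_mk, Set.indicator_apply, Set.mem_ofPred_eq,
      Pi.one_apply, ite_mul, one_mul, zero_mul, ← sum_filter,
      compCount_eq_sum_antidiagonal A hn, Nat.cast_sum, sub_self, hn.ne', if_false]

theorem one_sub_X_pow_mul_partsSeries_not_dvd (k : ℕ) :
    (1 - X ^ k) * partsSeries R {x | 0 < x ∧ ¬ k ∣ x} = ∑ i ∈ Ico 1 k, X ^ i := by
  ext n
  rw [sub_mul, one_mul, map_sub, coeff_X_pow_mul', map_sum]
  simp only [partsSeries, coeff_mk, coeff_X_pow, sum_ite_eq, Set.indicator_apply,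
    Set.mem_ofPred_eq, Pi.one_apply, mem_Ico, and_self_left]
  rcases lt_or_ge n k with hnk | hkn
  · have : k ∣ n ↔ n = 0 := ⟨fun h => Nat.eq_zero_of_dvd_of_lt h hnk, by rintro rfl; simp⟩
    simp [hnk, this, hnk.not_ge, Nat.pos_iff_ne_zero, Nat.one_le_iff_ne_zero]
  · have hperiodic : (0 < n ∧ ¬ k ∣ n) ↔ (0 < n - k ∧ ¬ k ∣ (n - k)) := by
      rcases hkn.eq_or_lt with rfl | hlt
      · simp
      · simp [hlt.not_ge, Nat.sub_pos_of_lt hlt, hlt.trans_le' (Nat.zero_le k)]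
    simp only [if_pos hkn, ← hperiodic, sub_self, hkn.not_gt, and_false, if_false]

end Series

theorem generating_function_avoiding_multiples_of_k (k : ℕ) (hk : 1 ≤ k) :
    (1 - ∑ i ∈ Finset.Icc 1 k, (PowerSeries.X : PowerSeries ℤ) ^ i) *
      (PowerSeries.mk fun n => (compCount {x | 0 < x ∧ ¬ k ∣ x} n : ℤ)) =
      1 - PowerSeries.X ^ k := by
  set A := {x | 0 < x ∧ ¬ k ∣ x}
  have hfactor : 1 - ∑ i ∈ Icc 1 k, (X : ℤ⟦X⟧) ^ i = (1 - X ^ k) * (1 - partsSeries ℤ A) := by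
    rw [mul_sub, mul_one, one_sub_X_pow_mul_partsSeries_not_dvd, ← Ico_add_one_right_eq_Icc,
      sum_Ico_succ_top hk]
    abel
  change _ * compSeries ℤ A = _
  rw [hfactor, mul_assoc, one_sub_partsSeries_mul_compSeries, mul_one]
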